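/- arXiv:2205.03007 — 3 statements merged into one kernel-verified Lean document; each statement's English description precedes it below -/
import Mathlib

section
/- Let δ, ε₀ > 0 be constants and set C = √(1/2 + (1/2)·((2+δ)/ε₀)²). Let γ₁ = u(α₁,β₁) and γ₂ = u(α₂,β₂) be special unitary 2×2 matrices (so αℓ, βℓ ∈ ℂ with |αℓ|² + |βℓ|² = 1). Suppose | |α₁| − |α₂| | < ε for some ε with 0 < ε < δ, and min{|α₁|, |α₂|} < √(1 − ε₀²). Define θ₁ = (arg α₁ − arg α₂ + arg β₁ − arg β₂)/2 and θ₂ = (arg α₁ − arg α₂ − arg β₁ + arg β₂)/2, where arg is the principal argument (with arg 0 = 0). Then d(γ₁, u(θ₁)·γ₂·u(θ₂)) < C·ε. -/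
open Matrix

/-- The special unitary matrix `u(α,β) = [[α, β], [-conj β, conj α]]`. -/
noncomputable def umat (α β : ℂ) : Matrix (Fin 2) (Fin 2) ℂ :=
  !![α, β; -(starRingEnd ℂ) β, (starRingEnd ℂ) α]

/-- The diagonal unitary `u(θ) = diag(e^{iθ}, e^{-iθ})`. -/
noncomputable def udiag (θ : ℝ) : Matrix (Fin 2) (Fin 2) ℂ :=
  umat (Complex.exp (θ * Complex.I)) 0

/-- The bi-invariant metric `d(A,B) = √(1 - |tr(A*B)|/2)` on `U(2)`. -/
noncomputable def dU (A B : Matrix (Fin 2) (Fin 2) ℂ) : ℝ :=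
  Real.sqrt (1 - ‖Matrix.trace (Aᴴ * B)‖ / 2)

/-!
Conjugating by the diagonal phases `u(θ₁)`, `u(θ₂)` turns `conj α₁ · α₂` and `conj β₁ · β₂` into
the nonnegative reals `|α₁||α₂|` and `|β₁||β₂|`, so the trace is `2(|α₁||α₂| + |β₁||β₂|)` and
`d² = ((|α₁| - |α₂|)² + (|β₁| - |β₂|)²) / 2`. The `β`-gap is controlled by the `α`-gap through
`(|β₁| - |β₂|)(|β₁| + |β₂|) = (|α₂| - |α₁|)(|α₂| + |α₁|)`, and the hypothesis on `min` gives
`|β₁| + |β₂| > ε₀`.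
-/

open Complex ComplexConjugate

lemma conj_exp_ofReal_mul_I (θ : ℝ) : conj (exp (θ * I)) = exp (-θ * I) := by
  rw [← exp_conj, map_mul, conj_ofReal, conj_I, neg_mul, mul_neg]

lemma trace_conjTranspose_umat_mul_diag (α₁ β₁ α₂ β₂ a b : ℂ) :
    trace ((umat α₁ β₁)ᴴ * (umat a 0 * umat α₂ β₂ * umat b 0)) =
      ((2 * ((conj α₁ * (a * b) * α₂).re + (conj β₁ * (a * conj b) * β₂).re) : ℝ) : ℂ) := by
  rw [mul_add, ofReal_add, ← Complex.add_conj, ← Complex.add_conj]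
  simp only [umat, trace_fin_two, conjTranspose_apply, mul_apply, Fin.sum_univ_two, of_apply,
    cons_val', cons_val_zero, cons_val_one, empty_val', cons_val_fin_one, map_mul, map_neg,
    map_zero, star_def, conj_conj]
  ring

lemma conj_mul_exp_arg_mul_I (z : ℂ) : conj z * exp (arg z * I) = ‖z‖ := by
  conv_lhs => rw [← norm_mul_exp_arg_mul_I z]
  rw [map_mul, conj_ofReal, conj_exp_ofReal_mul_I, mul_assoc, ← exp_add]
  simp

lemma conj_mul_exp_arg_sub_mul (z w : ℂ) :
    conj z * exp ((arg z - arg w : ℝ) * I) * w = (‖z‖ * ‖w‖ : ℝ) := by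
  have hw : w / exp (arg w * I) = ‖w‖ :=
    (div_eq_iff (exp_ne_zero _)).mpr (norm_mul_exp_arg_mul_I w).symm
  rw [ofReal_sub, sub_mul, exp_sub, ofReal_mul, ← conj_mul_exp_arg_mul_I, ← hw]
  ring

lemma exp_mul_I_mul_exp_mul_I (θ₁ θ₂ : ℝ) :
    exp (θ₁ * I) * exp (θ₂ * I) = exp ((θ₁ + θ₂ : ℝ) * I) := by
  rw [← exp_add, ofReal_add, add_mul]

lemma exp_mul_I_mul_conj_exp_mul_I (θ₁ θ₂ : ℝ) :
    exp (θ₁ * I) * conj (exp (θ₂ * I)) = exp ((θ₁ - θ₂ : ℝ) * I) := by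
  rw [conj_exp_ofReal_mul_I, ← exp_add, ofReal_sub, sub_eq_add_neg, add_mul]

lemma abs_lt_of_lt_sqrt_one_sub_sq {r s c : ℝ} (hr : 0 ≤ r) (hs : 0 ≤ s) (h : r ^ 2 + s ^ 2 = 1)
    (hlt : r < √(1 - c ^ 2)) : |c| < s := by
  have : r ^ 2 < 1 - c ^ 2 := (Real.lt_sqrt hr).mp hlt
  exact abs_lt_of_sq_lt_sq (by linarith) hs

lemma abs_lt_add_of_min_lt_sqrt {r₁ s₁ r₂ s₂ c : ℝ} (hr₁ : 0 ≤ r₁) (hs₁ : 0 ≤ s₁)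
    (hr₂ : 0 ≤ r₂) (hs₂ : 0 ≤ s₂) (h₁ : r₁ ^ 2 + s₁ ^ 2 = 1) (h₂ : r₂ ^ 2 + s₂ ^ 2 = 1)
    (hmin : min r₁ r₂ < √(1 - c ^ 2)) : |c| < s₁ + s₂ := by
  rcases min_lt_iff.mp hmin with h | h
  · linarith [abs_lt_of_lt_sqrt_one_sub_sq hr₁ hs₁ h₁ h]
  · linarith [abs_lt_of_lt_sqrt_one_sub_sq hr₂ hs₂ h₂ h]

lemma mul_abs_sub_le_two_mul_abs_sub {r₁ s₁ r₂ s₂ c : ℝ} (h₁ : r₁ ^ 2 + s₁ ^ 2 = 1)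
    (h₂ : r₂ ^ 2 + s₂ ^ 2 = 1) (hc : c ≤ s₁ + s₂) : c * |s₁ - s₂| ≤ 2 * |r₁ - r₂| := by
  have hprod : |s₁ - s₂| * |s₁ + s₂| = |r₁ - r₂| * |r₁ + r₂| := by
    rw [← abs_mul, ← abs_mul, ← abs_neg ((r₁ - r₂) * (r₁ + r₂))]
    congr 1
    linear_combination h₁ - h₂
  have hr : |r₁ + r₂| ≤ 2 :=
    abs_le_of_sq_le_sq (by nlinarith [sq_nonneg (r₁ - r₂), sq_nonneg s₁, sq_nonneg s₂]) two_pos.le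
  calc c * |s₁ - s₂| ≤ |s₁ - s₂| * |s₁ + s₂| := by
        rw [mul_comm]; gcongr; exact hc.trans (le_abs_self _)
    _ = |r₁ - r₂| * |r₁ + r₂| := hprod
    _ ≤ 2 * |r₁ - r₂| := by rw [mul_comm]; gcongr

lemma one_sub_mul_add_mul_lt {δ c ε r₁ s₁ r₂ s₂ : ℝ} (hδ : 0 ≤ δ) (hc : c ≠ 0)
    (h₁ : r₁ ^ 2 + s₁ ^ 2 = 1) (h₂ : r₂ ^ 2 + s₂ ^ 2 = 1) (hclose : |r₁ - r₂| < ε)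
    (hs : |c| ≤ s₁ + s₂) :
    1 - (r₁ * r₂ + s₁ * s₂) < (1 / 2 + 1 / 2 * ((2 + δ) / c) ^ 2) * ε ^ 2 := by
  have hc' : 0 < |c| := abs_pos.mpr hc
  have hε : 0 < ε := (abs_nonneg _).trans_lt hclose
  have hs_sub : |s₁ - s₂| < (2 + δ) / |c| * ε := by
    rw [div_mul_eq_mul_div, lt_div_iff₀ hc', mul_comm]
    calc |c| * |s₁ - s₂| ≤ 2 * |r₁ - r₂| := mul_abs_sub_le_two_mul_abs_sub h₁ h₂ hs
      _ < 2 * ε := by gcongr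
      _ ≤ (2 + δ) * ε := by gcongr; linarith
  have hr_sq : (r₁ - r₂) ^ 2 < ε ^ 2 := by
    rw [← sq_abs]; exact pow_lt_pow_left₀ hclose (abs_nonneg _) two_ne_zero
  have hs_sq : (s₁ - s₂) ^ 2 < ((2 + δ) / c) ^ 2 * ε ^ 2 := by
    rw [div_pow, ← sq_abs c, ← div_pow, ← mul_pow, ← sq_abs (s₁ - s₂)]
    exact pow_lt_pow_left₀ hs_sub (abs_nonneg _) two_ne_zero
  have hid : 1 - (r₁ * r₂ + s₁ * s₂) = ((r₁ - r₂) ^ 2 + (s₁ - s₂) ^ 2) / 2 := by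
    linear_combination -h₁ / 2 - h₂ / 2
  rw [hid]
  linarith

theorem stmt0_general (δ ε₀ : ℝ) (hδ : 0 < δ) (hε₀ : 0 < ε₀)
    (C : ℝ) (hC : C = Real.sqrt (1/2 + 1/2 * ((2 + δ) / ε₀)^2))
    (α₁ β₁ α₂ β₂ : ℂ)
    (h1 : ‖α₁‖ ^ 2 + ‖β₁‖ ^ 2 = 1)
    (h2 : ‖α₂‖ ^ 2 + ‖β₂‖ ^ 2 = 1)
    (ε : ℝ) (hε : 0 < ε)
    (hclose : |‖α₁‖ - ‖α₂‖| < ε)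
    (hmin : min ‖α₁‖ ‖α₂‖ < Real.sqrt (1 - ε₀^2))
    (θ₁ θ₂ : ℝ)
    (hθ₁ : θ₁ = (α₁.arg - α₂.arg + β₁.arg - β₂.arg) / 2)
    (hθ₂ : θ₂ = (α₁.arg - α₂.arg - β₁.arg + β₂.arg) / 2) :
    dU (umat α₁ β₁) (udiag θ₁ * umat α₂ β₂ * udiag θ₂) < C * ε := by
  have hsum : θ₁ + θ₂ = arg α₁ - arg α₂ := by rw [hθ₁, hθ₂]; ring
  have hdiff : θ₁ - θ₂ = arg β₁ - arg β₂ := by rw [hθ₁, hθ₂]; ring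
  have htrace : trace ((umat α₁ β₁)ᴴ * (udiag θ₁ * umat α₂ β₂ * udiag θ₂)) =
      ((2 * (‖α₁‖ * ‖α₂‖ + ‖β₁‖ * ‖β₂‖) : ℝ) : ℂ) := by
    rw [udiag, udiag, trace_conjTranspose_umat_mul_diag, exp_mul_I_mul_exp_mul_I,
      exp_mul_I_mul_conj_exp_mul_I, hsum, hdiff, conj_mul_exp_arg_sub_mul,
      conj_mul_exp_arg_sub_mul, ofReal_re, ofReal_re]
  have hs := abs_lt_add_of_min_lt_sqrt (norm_nonneg _) (norm_nonneg _) (norm_nonneg _)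
    (norm_nonneg _) h1 h2 hmin
  have key := one_sub_mul_add_mul_lt hδ.le hε₀.ne' h1 h2 hclose hs.le
  rw [dU, htrace, norm_real, Real.norm_of_nonneg (by positivity), hC,
    Real.sqrt_lt' (by positivity), mul_pow, Real.sq_sqrt (by positivity)]
  linarith

theorem stmt0 (δ ε₀ : ℝ) (hδ : 0 < δ) (hε₀ : 0 < ε₀)
    (C : ℝ) (hC : C = Real.sqrt (1/2 + 1/2 * ((2 + δ) / ε₀)^2))
    (α₁ β₁ α₂ β₂ : ℂ)
    (h1 : ‖α₁‖ ^ 2 + ‖β₁‖ ^ 2 = 1)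
    (h2 : ‖α₂‖ ^ 2 + ‖β₂‖ ^ 2 = 1)
    (ε : ℝ) (hε : 0 < ε) (hεδ : ε < δ)
    (hclose : |‖α₁‖ - ‖α₂‖| < ε)
    (hmin : min ‖α₁‖ ‖α₂‖ < Real.sqrt (1 - ε₀^2))
    (θ₁ θ₂ : ℝ)
    (hθ₁ : θ₁ = (α₁.arg - α₂.arg + β₁.arg - β₂.arg) / 2)
    (hθ₂ : θ₂ = (α₁.arg - α₂.arg - β₁.arg + β₂.arg) / 2) :
    dU (umat α₁ β₁) (udiag θ₁ * umat α₂ β₂ * udiag θ₂) < C * ε :=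
  stmt0_general δ ε₀ hδ hε₀ C hC α₁ β₁ α₂ β₂ h1 h2 ε hε hclose hmin θ₁ θ₂ hθ₁ hθ₂
end

section
/- Let u ∈ ℤ[φ] be nonzero. Then it is not the case that both u and uφ are sums of two squares in ℤ[φ]; that is, there do not simultaneously exist w, x, y, z ∈ ℤ[φ] with u = w² + x² and uφ = y² + z². -/
open Polynomial

/-- `ℤ[φ] = ℤ[X]/(X² - X - 1)`, the ring of integers of `ℚ(√5)`. -/
noncomputable abbrev Zphi : Type := AdjoinRoot ((X : ℤ[X])^2 - X - 1)

/-- The golden ratio `φ` as an element of `ℤ[φ]`. -/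
noncomputable def phi : Zphi := AdjoinRoot.root _

/-- The field norm `N = N_{ℚ(√5)/ℚ}` restricted to `ℤ[φ]`; `N(a + bφ) = a² + ab - b²`. -/
noncomputable def Nphi : Zphi → ℤ := Algebra.norm ℤ

/-- The associated prime of `u`: the least positive rational prime dividing `N(u)`. -/
noncomputable def assocPrime (u : Zphi) : ℕ := sInf {p : ℕ | p.Prime ∧ (p : ℤ) ∣ Nphi u}

/-!
Let `σ : ℤ[φ] → ℝ` be the embedding sending `φ` to its conjugate `ψ = (1 - √5)/2 < 0`. Sums of
squares are mapped to nonnegative reals, so `σ u ≥ 0` and `σ (u φ) = σ u · ψ ≥ 0` force `σ u = 0`,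
and `σ` is injective because `ψ` is irrational.
-/

open Real goldenRatio

theorem AdjoinRoot.exists_eq_of_add_of_mul_root {R : Type*} [CommRing R] {g : R[X]}
    (hg : g.Monic) (hdeg : g.natDegree = 2) (u : AdjoinRoot g) :
    ∃ a b : R, u = of g a + of g b * root g := by
  nontriviality AdjoinRoot g
  obtain ⟨f, hf, rfl⟩ := (powerBasis' hg).exists_eq_aeval u
  rw [powerBasis'_dim, hdeg] at hf
  rw [eq_X_add_C_of_natDegree_le_one (by omega : f.natDegree ≤ 1)]
  exact ⟨f.coeff 0, f.coeff 1, by simp [add_comm]⟩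

namespace Zphi

lemma exists_eq_intCast_add_mul_phi (u : Zphi) : ∃ a b : ℤ, u = a + b * phi := by
  obtain ⟨a, b, rfl⟩ := AdjoinRoot.exists_eq_of_add_of_mul_root (by monicity!)
    (by compute_degree!) u
  exact ⟨a, b, by simp [phi]⟩

noncomputable def conjEmbedding : Zphi →+* ℝ :=
  AdjoinRoot.lift (Int.castRingHom ℝ) ψ (by simp [goldenConj_sq])

lemma conjEmbedding_phi : conjEmbedding phi = ψ := AdjoinRoot.lift_root _

lemma conjEmbedding_injective : Function.Injective conjEmbedding := by
  refine (injective_iff_map_eq_zero _).mpr fun u hu => ?_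
  obtain ⟨a, b, rfl⟩ := exists_eq_intCast_add_mul_phi u
  simp only [map_add, map_mul, map_intCast, conjEmbedding_phi] at hu
  obtain rfl : b = 0 := by
    by_contra hb
    exact ((goldenConj_irrational.intCast_mul hb).intCast_add a).ne_zero hu
  obtain rfl : a = 0 := by simpa using hu
  simp

lemma conjEmbedding_sq_add_sq_nonneg (s t : Zphi) : 0 ≤ conjEmbedding (s ^ 2 + t ^ 2) := by
  simp only [map_add, map_pow]
  positivity

end Zphi

open Zphi

/-- For nonzero u ∈ ℤ[φ], not both u and uφ are sums of two squares. -/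
theorem stmt6 (u : Zphi) (hu : u ≠ 0) :
    ¬ ((∃ w x : Zphi, u = w ^ 2 + x ^ 2) ∧ (∃ y z : Zphi, u * phi = y ^ 2 + z ^ 2)) := by
  rintro ⟨⟨w, x, hwx⟩, ⟨y, z, hyz⟩⟩
  have hu_nonneg : 0 ≤ conjEmbedding u := hwx ▸ conjEmbedding_sq_add_sq_nonneg w x
  have huφ_nonneg : 0 ≤ conjEmbedding u * ψ := by
    rw [← conjEmbedding_phi, ← map_mul, hyz]
    exact conjEmbedding_sq_add_sq_nonneg y z
  have hu_zero : conjEmbedding u = 0 :=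
    le_antisymm (nonpos_of_mul_nonneg_left huφ_nonneg goldenConj_neg) hu_nonneg
  exact hu (conjEmbedding_injective (hu_zero.trans (map_zero _).symm))
end

section
/- Let θ, ε, y₀, y₁ be real numbers with 0 < ε and ε² ≤ 2. Suppose y₀² ≤ 1 − y₁², and suppose 0 ≤ 1 − ε² − y₁·sin θ ≤ y₀·cos θ. Then |y₁ − (1 − ε²)·sin θ| ≤ |cos θ|·ε·√(2 − ε²). -/
theorem stmt12 (θ ε y₀ y₁ : ℝ) (hε : 0 < ε) (hε2 : ε ^ 2 ≤ 2)
    (h0 : y₀ ^ 2 ≤ 1 - y₁ ^ 2)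
    (h1 : 0 ≤ 1 - ε ^ 2 - y₁ * Real.sin θ)
    (h2 : 1 - ε ^ 2 - y₁ * Real.sin θ ≤ y₀ * Real.cos θ) :
    |y₁ - (1 - ε ^ 2) * Real.sin θ| ≤ |Real.cos θ| * ε * Real.sqrt (2 - ε ^ 2) := by
  set s := Real.sin θ
  set c := Real.cos θ
  have hsc : s ^ 2 + c ^ 2 = 1 := Real.sin_sq_add_cos_sq θ
  have hkey : (1 - ε ^ 2 - y₁ * s) ^ 2 ≤ (1 - y₁ ^ 2) * c ^ 2 := by
    have h3 : (1 - ε ^ 2 - y₁ * s) ^ 2 ≤ (y₀ * c) ^ 2 := by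
      have := sq_le_sq' (by linarith) h2
      linarith [this]
    nlinarith [sq_nonneg c, sq_nonneg y₀]
  have hc2 : c ^ 2 = 1 - s ^ 2 := by linarith
  have hsq : (y₁ - (1 - ε ^ 2) * s) ^ 2 ≤ c ^ 2 * ε ^ 2 * (2 - ε ^ 2) := by
    rw [hc2] at hkey ⊢
    nlinarith [hkey]
  have h4 : |y₁ - (1 - ε ^ 2) * s| = Real.sqrt ((y₁ - (1 - ε ^ 2) * s) ^ 2) :=
    (Real.sqrt_sq_eq_abs _).symm
  rw [h4]
  have h5 : |c| * ε * Real.sqrt (2 - ε ^ 2) = Real.sqrt (c ^ 2 * ε ^ 2 * (2 - ε ^ 2)) := by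
    rw [Real.sqrt_mul (by positivity), Real.sqrt_mul (by positivity),
      Real.sqrt_sq_eq_abs, Real.sqrt_sq hε.le]
  rw [h5]
  exact Real.sqrt_le_sqrt hsq
end
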